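/- arXiv:1809.08577 — 2 statements merged into one kernel-verified Lean document; each statement's English description precedes it below -/
import Mathlib

section
/- Let $m \geq n \geq 0$ be integers. For $1 \leq t \leq n+1$ define $a_t := [m+t][m+t-1]\cdots[m+t-n+1]$, a product of $n$ consecutive quantum integers, where $[l] = (q^l - q^{-l})/(q - q^{-1}) \in \mathbb{Z}[q,q^{-1}]$. Then the greatest common divisor in $\mathbb{Z}[q,q^{-1}]$ (up to units) of $a_1, a_2, \ldots, a_{n+1}$ equals $[n]! = [1][2]\cdots[n]$. -/
/-! Everything follows from the q-analogue of Pascal's rule for products of consecutive quantum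
integers, `[N+1]⋯[N-n+1] = q^{n+1}·[N]⋯[N-n] + q^{n-N}·[n+1]·[N]⋯[N-n+1]`, a consequence of
`[a+b] = q^b[a] + q^{-a}[b]`. Read forwards, it gives `[n]! ∣ a_t` by induction on `N`. Since
powers of `q` are units, it also shows that a common divisor of the `n+2` products of `n+1`
consecutive quantum integers divides `[n+1]` times each of the `n+1` products of `n` of them, so
induction on `n` brings every common divisor of the `a_t` down to a divisor of `[n]!`. -/

noncomputable section

open Finset LaurentPolynomial

/-- The balanced quantum integer `[l] = q^{l-1} + q^{l-3} + ⋯ + q^{1-l}`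
(equal to `(q^l - q^{-l})/(q - q^{-1})`) in the Laurent polynomial ring `ℤ[q,q⁻¹]`. -/
def qInt (l : ℕ) : LaurentPolynomial ℤ :=
  ∑ k ∈ Finset.range l, T ((l : ℤ) - 1 - 2 * k)

/-- The quantum factorial `[n]! = [1][2]⋯[n]`. -/
def qFact (n : ℕ) : LaurentPolynomial ℤ :=
  ∏ l ∈ Finset.range n, qInt (l + 1)

@[simp]
lemma qInt_zero : qInt 0 = 0 := by simp [qInt]

lemma qInt_add (a b : ℕ) : qInt (a + b) = T b * qInt a + T (-a) * qInt b := by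
  simp only [qInt, sum_range_add, mul_sum, ← T_add]
  congr 1 <;> refine sum_congr rfl fun k _ => ?_ <;> congr 1 <;> push_cast <;> ring

lemma qFact_succ (n : ℕ) : qFact (n + 1) = qFact n * qInt (n + 1) :=
  prod_range_succ _ _

def qDescFactorial (N n : ℕ) : LaurentPolynomial ℤ :=
  ∏ k ∈ range n, qInt (N - k)

lemma qDescFactorial_succ_right (N n : ℕ) :
    qDescFactorial N (n + 1) = qDescFactorial N n * qInt (N - n) :=
  prod_range_succ _ _

lemma qDescFactorial_succ_succ (N n : ℕ) :
    qDescFactorial (N + 1) (n + 1) = qInt (N + 1) * qDescFactorial N n := by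
  simp only [qDescFactorial, prod_range_succ', Nat.add_sub_add_right, Nat.sub_zero, mul_comm]

lemma qDescFactorial_eq_zero_of_lt {N n : ℕ} (h : N < n) : qDescFactorial N n = 0 :=
  prod_eq_zero (mem_range.mpr h) (by simp)

theorem qDescFactorial_pascal (N n : ℕ) :
    qDescFactorial (N + 1) (n + 1) =
      T (n + 1) * qDescFactorial N (n + 1) + T (n - N) * (qInt (n + 1) * qDescFactorial N n) := by
  rcases lt_or_ge N n with hlt | hle
  · simp [qDescFactorial_eq_zero_of_lt, hlt, hlt.trans (Nat.lt_succ_self n)]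
  · obtain ⟨d, rfl⟩ := Nat.exists_eq_add_of_le hle
    have hsplit : qInt (n + d + 1) = T (n + 1) * qInt d + T (-d) * qInt (n + 1) := by
      rw [show n + d + 1 = d + (n + 1) by omega, qInt_add]
      push_cast
      rfl
    rw [qDescFactorial_succ_succ, qDescFactorial_succ_right, hsplit,
      show n + d - n = d by omega]
    push_cast
    ring_nf

theorem qFact_dvd_qDescFactorial (N n : ℕ) : qFact n ∣ qDescFactorial N n := by
  induction N generalizing n with
  | zero =>
    cases n with
    | zero => simp [qFact]
    | succ n => simp [qDescFactorial_eq_zero_of_lt]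
  | succ N ih =>
    cases n with
    | zero => simp [qFact]
    | succ n =>
      have hlast : qFact (n + 1) ∣ qInt (n + 1) * qDescFactorial N n := by
        rw [qFact_succ, mul_comm (qFact n)]
        exact mul_dvd_mul_left _ (ih n)
      rw [qDescFactorial_pascal]
      exact dvd_add ((ih (n + 1)).mul_left _) (hlast.mul_left _)

theorem dvd_mul_qFact_of_forall_dvd_mul_qDescFactorial {c d : LaurentPolynomial ℤ} {m n : ℕ}
    (h : ∀ t ∈ Icc 1 (n + 1), c ∣ d * qDescFactorial (m + t) n) : c ∣ d * qFact n := by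
  induction n generalizing d with
  | zero => simpa [qFact, qDescFactorial] using h 1 (by simp)
  | succ n ih =>
    rw [qFact_succ, mul_comm (qFact n), ← mul_assoc]
    refine ih fun t ht => ?_
    have ht' : t ∈ Icc 1 (n + 2) := by simp only [mem_Icc] at ht ⊢; omega
    have hnext : c ∣ d * qDescFactorial (m + t + 1) (n + 1) := h (t + 1) (by simp at ht ⊢; omega)
    rw [qDescFactorial_pascal, mul_add, mul_left_comm, mul_left_comm d (T _), ← mul_assoc d,
      dvd_add_right ((h t ht').mul_left _), (isUnit_T _).dvd_mul_left] at hnext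
    exact hnext

theorem gcd_consecutive_qInt_products_general (m n : ℕ) :
    (∀ t ∈ Finset.Icc 1 (n + 1),
        qFact n ∣ ∏ k ∈ Finset.range n, qInt (m + t - k)) ∧
    (∀ c : LaurentPolynomial ℤ,
        (∀ t ∈ Finset.Icc 1 (n + 1), c ∣ ∏ k ∈ Finset.range n, qInt (m + t - k)) →
        c ∣ qFact n) := by
  refine ⟨fun t _ => qFact_dvd_qDescFactorial (m + t) n, fun c h => ?_⟩
  simpa using dvd_mul_qFact_of_forall_dvd_mul_qDescFactorial (d := 1) (m := m) (n := n)
    fun t ht => by simpa [qDescFactorial] using h t ht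

/-- For `m ≥ n ≥ 0` and `1 ≤ t ≤ n+1`, the products
`a_t = [m+t][m+t-1]⋯[m+t-n+1]` of `n` consecutive quantum integers have
greatest common divisor (up to units) equal to `[n]!` in `ℤ[q,q⁻¹]`. -/
theorem gcd_consecutive_qInt_products (m n : ℕ) (hmn : n ≤ m) :
    (∀ t ∈ Finset.Icc 1 (n + 1),
        qFact n ∣ ∏ k ∈ Finset.range n, qInt (m + t - k)) ∧
    (∀ c : LaurentPolynomial ℤ,
        (∀ t ∈ Finset.Icc 1 (n + 1), c ∣ ∏ k ∈ Finset.range n, qInt (m + t - k)) →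
        c ∣ qFact n) :=
  gcd_consecutive_qInt_products_general m n
end
end

section
/- Let $W$ be a finite Coxeter group with longest element $w_0$, $\mathcal{H}$ its unequal-parameter Hecke algebra, and define the bilinear form $\langle H \mid H' \rangle := d(H')(H)$ on $\mathcal{H}$, where $d(H) = H\cdot h_{w_0}$. Then this bilinear form is symmetric, and satisfies $\langle H' \mid H H'' \rangle = \langle H^\flat H' \mid H'' \rangle$. -/
set_option synthInstance.maxHeartbeats 1000000
set_option maxHeartbeats 1000000

noncomputable section

open Finset LaurentPolynomial CoxeterSystem

/-- The ring `𝒜_ℤ = ℤ[p^{±1}, q^{±1}]`. -/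
abbrev AZ : Type := LaurentPolynomial (LaurentPolynomial ℤ)

/-- The bilinear form `⟨a ∣ b⟩ := d(b)(a) = h_{w₀}(b^♭ a)` on the Hecke algebra. -/
def heckeForm {W H : Type} [Ring H] [Algebra AZ H] (TH : Module.Basis W AZ H)
    (flat : H →ₗ[AZ] H) (w₀ : W) (a b : H) : AZ :=
  TH.repr (flat b * a) w₀

/-! Since `♭` is an involutive anti-automorphism and `h_{w₀}(H^♭) = h_{w₀}(H)` (because `w₀` is an
involution), `⟨a ∣ b⟩ = h_{w₀}(b^♭ a) = h_{w₀}((a^♭ b)^♭) = ⟨b ∣ a⟩` and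
`⟨y ∣ x z⟩ = h_{w₀}(z^♭ x^♭ y) = ⟨x^♭ y ∣ z⟩`.

That `w₀⁻¹ = w₀` comes from Tits' sign cocycle `η(w, t) ∈ ZMod 2`, read off from the action of `W`
on `W × ZMod 2` in which `s` acts by `(t, e) ↦ (s t s, e + [t = s])`; `η(w, t) = 1` exactly when
the reflection `t` satisfies `ℓ(w t) < ℓ(w)`. Every reflection lowers both `w₀` and `w₀⁻¹`, so the
cocycle identity for `w₀⁻¹ = w₀ · w₀⁻²` shows that `w₀⁻²` has no right descent, i.e. `w₀⁻² = 1`. -/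

section ConjToggle

variable {G : Type*} [Group G]

theorem conj_eq_iff_eq_conj_inv {a t u : G} : a * t * a⁻¹ = u ↔ t = a⁻¹ * u * a := by
  constructor <;> rintro rfl <;> group

variable [DecidableEq G]

def conjToggle (a : G) : Equiv.Perm (G × ZMod 2) where
  toFun p := (a * p.1 * a⁻¹, p.2 + if p.1 = a then 1 else 0)
  invFun p := (a⁻¹ * p.1 * a, p.2 - if p.1 = a then 1 else 0)
  left_inv p := Prod.ext (by group) (by simp [conj_eq_iff_eq_conj_inv])
  right_inv p := Prod.ext (by group) (by simp [inv_mul_eq_one, eq_comm (a := a)])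

theorem conjToggle_apply (a t : G) (e : ZMod 2) :
    conjToggle a (t, e) = (a * t * a⁻¹, e + if t = a then 1 else 0) := rfl

theorem conjToggle_mul_pow_apply {a b : G} (ha : a⁻¹ = a) (hb : b⁻¹ = b) (k : ℕ) (t : G)
    (e : ZMod 2) :
    ((conjToggle a * conjToggle b) ^ k) (t, e) =
      ((a * b) ^ k * t * ((a * b) ^ k)⁻¹,
        e + ∑ r ∈ range (2 * k), if t = b * (a * b) ^ r then 1 else 0) := by
  induction k generalizing t e with
  | zero => simp
  | succ k ih =>
    have hfirst : b * t * b⁻¹ = a ↔ t = b * (a * b) ^ 1 := by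
      rw [conj_eq_iff_eq_conj_inv, hb, pow_one, mul_assoc]
    have hshift (r : ℕ) : a * (b * t * b⁻¹) * a⁻¹ = b * (a * b) ^ r ↔
        t = b * (a * b) ^ (r + 1 + 1) := by
      rw [conj_eq_iff_eq_conj_inv, conj_eq_iff_eq_conj_inv]
      refine Iff.of_eq (congrArg (t = ·) ?_)
      rw [ha, hb, pow_succ, pow_succ']
      group
    rw [pow_succ, Equiv.Perm.mul_apply, Equiv.Perm.mul_apply, conjToggle_apply,
      conjToggle_apply, ih]
    simp only [hshift, hfirst, Nat.mul_succ, sum_range_succ' _ (2 * k + 1), sum_range_succ',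
      pow_zero, mul_one]
    refine Prod.ext ?_ ?_
    · dsimp only
      rw [pow_succ]
      group
    · dsimp only
      ring

theorem conjToggle_mul_pow_eq_one {a b : G} (ha : a⁻¹ = a) (hb : b⁻¹ = b) {m : ℕ}
    (hm : (a * b) ^ m = 1) : (conjToggle a * conjToggle b) ^ m = 1 := by
  -- the indicator sum over `2 * m` terms is `m`-periodic, so it counts everything twice
  ext ⟨t, e⟩ <;> rw [conjToggle_mul_pow_apply ha hb, two_mul, sum_range_add]
  · simp [hm]
  · simp [pow_add, hm, ← two_mul, (by decide : (2 : ZMod 2) = 0)]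

end ConjToggle

namespace CoxeterSystem

variable {B W : Type*} [Group W] {M : CoxeterMatrix B} (cs : CoxeterSystem M W)

local prefix:100 "s" => cs.simple
local prefix:100 "π" => cs.wordProd
local prefix:100 "ℓ" => cs.length
local prefix:100 "ris" => cs.rightInvSeq

section ReflectionCocycle

variable [DecidableEq W]

theorem isLiftable_conjToggle : M.IsLiftable (fun i ↦ conjToggle (s i)) := fun i j ↦
  conjToggle_mul_pow_eq_one (cs.inv_simple i) (cs.inv_simple j) (cs.simple_mul_simple_pow i j)

def reflectionRep : W →* Equiv.Perm (W × ZMod 2) := cs.lift ⟨_, cs.isLiftable_conjToggle⟩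

theorem reflectionRep_simple (i : B) : cs.reflectionRep (s i) = conjToggle (s i) :=
  cs.lift_apply_simple _ i

def reflectionCocycle (w t : W) : ZMod 2 := (cs.reflectionRep w (t, 0)).2

theorem reflectionRep_wordProd (ω : List B) (t : W) (e : ZMod 2) :
    cs.reflectionRep (π ω) (t, e) = (π ω * t * (π ω)⁻¹, e + ((ris ω).count t : ZMod 2)) := by
  induction ω generalizing t e with
  | nil => simp
  | cons i ω ih =>
    have hcons : ris (i :: ω) = ((π ω)⁻¹ * s i * π ω) :: ris ω := rfl
    rw [wordProd_cons, map_mul, Equiv.Perm.mul_apply, ih, reflectionRep_simple, conjToggle_apply,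
      hcons, List.count_cons]
    refine Prod.ext (by simp only [mul_inv_rev, inv_simple]; group) ?_
    simp only [conj_eq_iff_eq_conj_inv, beq_iff_eq, eq_comm (b := t)]
    push_cast
    ring

theorem reflectionRep_apply (w t : W) (e : ZMod 2) :
    cs.reflectionRep w (t, e) = (w * t * w⁻¹, e + cs.reflectionCocycle w t) := by
  obtain ⟨ω, rfl⟩ := cs.wordProd_surjective w
  rw [reflectionCocycle, reflectionRep_wordProd, reflectionRep_wordProd, zero_add]

theorem reflectionCocycle_one (t : W) : cs.reflectionCocycle 1 t = 0 := by
  simp [reflectionCocycle]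

theorem reflectionCocycle_mul (u v t : W) :
    cs.reflectionCocycle (u * v) t =
      cs.reflectionCocycle v t + cs.reflectionCocycle u (v * t * v⁻¹) := by
  have h := congrArg Prod.snd (cs.reflectionRep_apply (u * v) t 0)
  rw [map_mul, Equiv.Perm.mul_apply, reflectionRep_apply, reflectionRep_apply] at h
  simpa using h.symm

theorem reflectionCocycle_simple_self (i : B) : cs.reflectionCocycle (s i) (s i) = 1 := by
  simp [reflectionCocycle, reflectionRep_simple, conjToggle_apply]

theorem reflectionCocycle_self {t : W} (ht : cs.IsReflection t) :
    cs.reflectionCocycle t t = 1 := by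
  obtain ⟨w, i, rfl⟩ := ht
  have hconj : w⁻¹ * (w * s i * w⁻¹) * w⁻¹⁻¹ = s i := by group
  have hexpand := cs.reflectionCocycle_mul (w * s i) w⁻¹ (w * s i * w⁻¹)
  rw [cs.reflectionCocycle_mul w (s i), hconj, mul_inv_cancel_right,
    cs.reflectionCocycle_simple_self] at hexpand
  have hcancel := cs.reflectionCocycle_mul w w⁻¹ (w * s i * w⁻¹)
  rw [mul_inv_cancel, reflectionCocycle_one, hconj] at hcancel
  linear_combination hexpand - hcancel

theorem length_mul_lt_of_reflectionCocycle_eq_one {w t : W}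
    (h : cs.reflectionCocycle w t = 1) : ℓ (w * t) < ℓ w := by
  obtain ⟨ω, hω, rfl⟩ := cs.exists_isReduced w
  rw [reflectionCocycle, reflectionRep_wordProd, zero_add] at h
  have hcount : (ris ω).count t ≠ 0 := by
    rintro h0
    simp [h0] at h
  exact (cs.isRightInversion_of_mem_rightInvSeq hω
    (List.count_pos_iff.mp (Nat.pos_of_ne_zero hcount))).2

theorem reflectionCocycle_mul_self {w t : W} (ht : cs.IsReflection t) :
    cs.reflectionCocycle (w * t) t = cs.reflectionCocycle w t + 1 := by
  rw [reflectionCocycle_mul, cs.reflectionCocycle_self ht, ht.inv, mul_assoc, ht.mul_self,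
    mul_one, add_comm]

theorem reflectionCocycle_eq_one_iff {w t : W} (ht : cs.IsReflection t) :
    cs.reflectionCocycle w t = 1 ↔ ℓ (w * t) < ℓ w := by
  refine ⟨cs.length_mul_lt_of_reflectionCocycle_eq_one, fun hlt ↦ by_contra fun hne ↦ ?_⟩
  have hflip : cs.reflectionCocycle (w * t) t = 1 := by
    rw [cs.reflectionCocycle_mul_self ht]
    generalize cs.reflectionCocycle w t = x at hne ⊢
    revert x
    decide
  have hlt' := cs.length_mul_lt_of_reflectionCocycle_eq_one hflip
  rw [mul_assoc, ht.mul_self, mul_one] at hlt'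
  omega

end ReflectionCocycle

theorem inv_eq_self_of_forall_length_le {w₀ : W} (hw₀ : ∀ w, ℓ w ≤ ℓ w₀) : w₀⁻¹ = w₀ := by
  classical
  have hmax {v : W} (hv : ℓ v = ℓ w₀) {t : W} (ht : cs.IsReflection t) :
      cs.reflectionCocycle v t = 1 :=
    (cs.reflectionCocycle_eq_one_iff ht).mpr
      (lt_of_le_of_ne (hv ▸ hw₀ _) (ht.length_mul_left_ne v))
  have hsq : w₀⁻¹ * w₀⁻¹ = 1 := by
    by_contra hne
    obtain ⟨i, hi⟩ := cs.exists_rightDescent_of_ne_one hne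
    have hsplit := cs.reflectionCocycle_mul w₀ (w₀⁻¹ * w₀⁻¹) (s i)
    rw [mul_inv_cancel_left, hmax (cs.length_inv w₀) (cs.isReflection_simple i),
      hmax rfl ((cs.isReflection_simple i).conj _),
      (cs.reflectionCocycle_eq_one_iff (cs.isReflection_simple i)).mpr hi] at hsplit
    exact absurd hsplit (by decide)
  exact (mul_eq_one_iff_eq_inv.mp hsq).trans (inv_inv w₀)

end CoxeterSystem

namespace Module.Basis

variable {W R M : Type*} [Group W] [Semiring R] [AddCommMonoid M] [Module R M]
  (b : Basis W R M) {f : M →ₗ[R] M}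

theorem repr_apply_of_map_inv (hf : ∀ w, f (b w) = b w⁻¹) (x : M) (w : W) :
    b.repr (f x) w = b.repr x w⁻¹ := by
  have h : Finsupp.lapply w ∘ₗ b.repr.toLinearMap ∘ₗ f =
      Finsupp.lapply w⁻¹ ∘ₗ b.repr.toLinearMap :=
    b.ext fun v ↦ by
      classical
      simp [hf, Finsupp.single_apply, inv_eq_iff_eq_inv]
  exact LinearMap.congr_fun h x

theorem involutive_of_map_inv (hf : ∀ w, f (b w) = b w⁻¹) : Function.Involutive f :=
  LinearMap.congr_fun (b.ext (f₁ := f ∘ₗ f) (f₂ := LinearMap.id) fun w ↦ by simp [hf])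

end Module.Basis

theorem heckeForm_symm_and_adjoint_general
    {B : Type} (M : CoxeterMatrix B) (W : Type) [Group W]
    (cs : CoxeterSystem M W)
    (H : Type) [Ring H] [Algebra AZ H] (TH : Module.Basis W AZ H)
    -- the anti-automorphism ♭ with H_w^♭ = H_{w⁻¹}
    (flat : H →ₗ[AZ] H)
    (hflatmul : ∀ x y : H, flat (x * y) = flat y * flat x)
    (hflatT : ∀ w : W, flat (TH w) = TH w⁻¹)
    -- the longest element
    (w₀ : W) (hw₀ : ∀ w : W, cs.length w ≤ cs.length w₀) :
    (∀ a b : H, heckeForm TH flat w₀ a b = heckeForm TH flat w₀ b a) ∧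
    (∀ x y z : H, heckeForm TH flat w₀ y (x * z) =
      heckeForm TH flat w₀ (flat x * y) z) := by
  have hrepr (h : H) : TH.repr (flat h) w₀ = TH.repr h w₀ := by
    rw [TH.repr_apply_of_map_inv hflatT, cs.inv_eq_self_of_forall_length_le hw₀]
  refine ⟨fun a b ↦ ?_, fun x y z ↦ ?_⟩
  · rw [heckeForm, heckeForm, ← hrepr, hflatmul, TH.involutive_of_map_inv hflatT]
  · rw [heckeForm, heckeForm, hflatmul, mul_assoc]

/-- The form `⟨H ∣ H'⟩ = d(H')(H)` is symmetric and satisfies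
`⟨H' ∣ H H''⟩ = ⟨H^♭ H' ∣ H''⟩`. -/
theorem heckeForm_symm_and_adjoint
    {B : Type} (M : CoxeterMatrix B) (W : Type) [Group W] [Fintype W]
    (cs : CoxeterSystem M W)
    (qp : B → AZˣ)
    (H : Type) [Ring H] [Algebra AZ H] (TH : Module.Basis W AZ H)
    (hone : TH 1 = 1)
    (hmulL : ∀ (i : B) (w : W),
      TH (cs.simple i) * TH w =
        if cs.length w < cs.length (cs.simple i * w) then TH (cs.simple i * w)
        else TH (cs.simple i * w) + ((((qp i)⁻¹ : AZˣ) : AZ) - ((qp i : AZˣ) : AZ)) • TH w)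
    -- the anti-automorphism ♭ with H_w^♭ = H_{w⁻¹}
    (flat : H →ₗ[AZ] H)
    (hflatmul : ∀ x y : H, flat (x * y) = flat y * flat x)
    (hflatT : ∀ w : W, flat (TH w) = TH w⁻¹)
    -- the longest element
    (w₀ : W) (hw₀ : ∀ w : W, cs.length w ≤ cs.length w₀) :
    (∀ a b : H, heckeForm TH flat w₀ a b = heckeForm TH flat w₀ b a) ∧
    (∀ x y z : H, heckeForm TH flat w₀ y (x * z) =
      heckeForm TH flat w₀ (flat x * y) z) :=
  heckeForm_symm_and_adjoint_general M W cs H TH flat hflatmul hflatT w₀ hw₀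
end
end
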